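/- arXiv:2503.11610 — 2 statements merged into one kernel-verified Lean document; each statement's English description precedes it below -/
import Mathlib

section
/- Let $S = \{(e_i,\nu_i) \mid i \in I\}$ be a log datum on $\mathbb{Z}^2$ with $|I| > 2$, let $j \in I$ and let $\ell_{j,k}$ be a part of $\nu_j$ with $h := h_{u_j}(S) \geq \ell_{j,k}$. Then the collection of vectors of the mutation $\mu_{j,k}(S)$ again sums to zero: $\sum_{i \in I'} e_i' = 0$. -/
/-- Vectors in the rank-2 lattice `L = ℤ²`. -/
abbrev Vec := ℤ × ℤ

/-- A pair `(e, ν)` of a vector and a partition (multiset of parts). -/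
abbrev LPair := Vec × Multiset ℕ

/-- The standard symplectic form `{a,b} = a₁b₂ - a₂b₁` on `ℤ²`. -/
def symp (a b : Vec) : ℤ := a.1 * b.2 - a.2 * b.1

/-- Positive part `m₊ = max(m,0)` of an integer. -/
def posZ (m : ℤ) : ℤ := max m 0

/-- A vector of `ℤ²` is primitive if the gcd of its coordinates is `1`. -/
def IsPrimitive (v : Vec) : Prop := Int.gcd v.1 v.2 = 1

/-- The integral length `ℓ` of a nonzero vector `e = ℓ u` with `u` primitive. -/
def vlen (e : Vec) : ℕ := Int.gcd e.1 e.2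

/-- The primitive direction `u` of a nonzero vector `e = ℓ u`. -/
def vdir (e : Vec) : Vec := (e.1 / (vlen e : ℤ), e.2 / (vlen e : ℤ))

/-- A log datum on `L = ℤ²`: a finite set of pairs `(eᵢ, νᵢ)` with each `eᵢ` nonzero,
`νᵢ` a partition of the integral length `ℓᵢ` of `eᵢ`, pairwise distinct primitive
directions, and `∑ eᵢ = 0`. -/
def IsLogDatum (S : Finset LPair) : Prop :=
  (∀ p ∈ S, p.1 ≠ 0) ∧
  (∀ p ∈ S, p.2.sum = vlen p.1) ∧
  (∀ p ∈ S, ∀ q ∈ S, vdir p.1 = vdir q.1 → p = q) ∧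
  (∑ p ∈ S, p.1) = 0

/-- The `u`-height `h_u(S) = ∑ᵢ {u, eᵢ}₊`. -/
def uheight (S : Finset LPair) (u : Vec) : ℤ := ∑ p ∈ S, posZ (symp u p.1)

/-- The mutation `μ_{j,k}(S)` of a log datum `S` in the pair `pj = (e_j, ν_j)` and the
part `l = ℓ_{j,k}` of `ν_j`:
(1) every `(eᵢ, νᵢ)` with `eᵢ ∉ ℤ u_j` is replaced by `(eᵢ + {u_j,eᵢ}₊ u_j, νᵢ)`;
(2) if `ν_j ≠ (l)` the pair `(e_j, ν_j)` is replaced by `((ℓ_j - l) u_j, ν_j ∖ {l})`,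
    otherwise it is removed;
(3) if there is a pair `(e_{j⋆}, ν_{j⋆})` with `u_{j⋆} = -u_j`, it is replaced by
    `(e_{j⋆} + (h - l) u_{j⋆}, ν_{j⋆} ∪ {h - l})`; otherwise, if `d = h - l > 0`,
    a new pair `(-d u_j, (d))` is added. -/
def mutate (S : Finset LPair) (pj : LPair) (l : ℕ) : Finset LPair :=
  let uj := vdir pj.1
  let h := uheight S uj
  let part1 := (S.filter (fun p => vdir p.1 ≠ uj ∧ vdir p.1 ≠ -uj)).image
      (fun p => (p.1 + posZ (symp uj p.1) • uj, p.2))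
  let part2 : Finset LPair :=
    if pj.2 = {l} then ∅ else {(((vlen pj.1 : ℤ) - (l : ℤ)) • uj, pj.2.erase l)}
  let part3 : Finset LPair :=
    if (S.filter (fun p => vdir p.1 = -uj)).Nonempty then
      (S.filter (fun p => vdir p.1 = -uj)).image
        (fun p => (p.1 + (h - (l : ℤ)) • (-uj), (h - (l : ℤ)).toNat ::ₘ p.2))
    else if (l : ℤ) < h then {((-(h - (l : ℤ))) • uj, {(h - (l : ℤ)).toNat})} else ∅
  part1 ∪ part2 ∪ part3


section helper

lemma smul_fst (c : ℤ) (v : Vec) : (c • v).1 = c * v.1 := rfl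
lemma smul_snd (c : ℤ) (v : Vec) : (c • v).2 = c * v.2 := rfl

lemma symp_self (u : Vec) : symp u u = 0 := by simp [symp]; ring
lemma symp_smul (u : Vec) (c : ℤ) (v : Vec) : symp u (c • v) = c * symp u v := by
  simp [symp, smul_fst, smul_snd]; ring
lemma symp_add (u v w : Vec) : symp u (v + w) = symp u v + symp u w := by
  simp [symp]; ring

lemma vlen_pos {e : Vec} (h : e ≠ 0) : 0 < (vlen e : ℤ) := by
  have : vlen e ≠ 0 := by
    simp only [vlen, Ne, Int.gcd_eq_zero_iff, not_and]
    intro h1 h2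
    exact h (Prod.ext h1 h2)
  positivity

lemma vdir_smul {e : Vec} (h : e ≠ 0) : (vlen e : ℤ) • vdir e = e := by
  have h1 : (vlen e : ℤ) ∣ e.1 := Int.gcd_dvd_left _ _
  have h2 : (vlen e : ℤ) ∣ e.2 := Int.gcd_dvd_right _ _
  apply Prod.ext <;> simp [vdir, smul_fst, smul_snd, Int.mul_ediv_cancel' h1, Int.mul_ediv_cancel' h2]

lemma isPrim_vdir {e : Vec} (h : e ≠ 0) : IsPrimitive (vdir e) := by
  have := vlen_pos h
  have hg : 0 < Int.gcd e.1 e.2 := by exact_mod_cast this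
  exact Int.gcd_div_gcd_div_gcd hg

lemma prim_ne_zero {u : Vec} (hu : IsPrimitive u) : u ≠ 0 := by
  intro h; rw [h] at hu; simp [IsPrimitive] at hu

lemma exists_c {u e : Vec} (hu : IsPrimitive u) (h0 : symp u e = 0) : ∃ c : ℤ, e = c • u := by
  have hc : IsCoprime u.1 u.2 := Int.isCoprime_iff_gcd_eq_one.mpr hu
  obtain ⟨a, b, hab⟩ := hc
  refine ⟨a * e.1 + b * e.2, ?_⟩
  have h' : u.1 * e.2 = u.2 * e.1 := by simp [symp] at h0; linarith
  apply Prod.ext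
  · show e.1 = (a * e.1 + b * e.2) * u.1
    linear_combination (-e.1) * hab - b * h'
  · show e.2 = (a * e.1 + b * e.2) * u.2
    linear_combination (-e.2) * hab + a * h'

lemma vdir_smul_prim {u : Vec} (hu : IsPrimitive u) {c : ℤ} (hc : c ≠ 0) :
    vdir (c • u) = u ∨ vdir (c • u) = -u := by
  have hu' : Int.gcd u.1 u.2 = 1 := hu
  have hlen : vlen (c • u) = c.natAbs := by
    simp only [vlen, smul_fst, smul_snd, Int.gcd_mul_left, hu', mul_one]
  rcases hc.lt_or_gt with h | h
  · right
    have : ((vlen (c • u) : ℤ)) = -c := by rw [hlen]; omega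
    apply Prod.ext <;> simp only [vdir, this, smul_fst, smul_snd]
    · show c * u.1 / (-c) = (-u).1
      rw [show c * u.1 = (-c) * (-u.1) by ring, Int.mul_ediv_cancel_left _ (by omega)]; rfl
    · show c * u.2 / (-c) = (-u).2
      rw [show c * u.2 = (-c) * (-u.2) by ring, Int.mul_ediv_cancel_left _ (by omega)]; rfl
  · left
    have : ((vlen (c • u) : ℤ)) = c := by rw [hlen]; omega
    apply Prod.ext <;> simp only [vdir, this, smul_fst, smul_snd]
    · exact Int.mul_ediv_cancel_left _ (by omega)
    · exact Int.mul_ediv_cancel_left _ (by omega)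

lemma symp_ne {u e : Vec} (he : e ≠ 0) (hu : IsPrimitive u) (h1 : vdir e ≠ u)
    (h2 : vdir e ≠ -u) : symp u e ≠ 0 := by
  intro h0
  obtain ⟨c, hc⟩ := exists_c hu h0
  have hc0 : c ≠ 0 := by rintro rfl; simp at hc; exact he hc
  rcases vdir_smul_prim hu hc0 with h | h <;> rw [hc] at h1 h2 <;> [exact h1 h; exact h2 h]


/-- the vectors of a mutation of a (rank-two) log datum again sum to zero. -/
theorem mutation_sum_eq_zero (S : Finset LPair) (hS : IsLogDatum S) (hcard : 2 < S.card)
    (pj : LPair) (hpj : pj ∈ S) (l : ℕ) (hl : l ∈ pj.2)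
    (hle : (l : ℤ) ≤ uheight S (vdir pj.1)) :
    (∑ p ∈ mutate S pj l, p.1) = 0 := by
  obtain ⟨hne, hpart, hdist, hsum⟩ := hS
  have hpj0 : pj.1 ≠ 0 := hne pj hpj
  simp only [mutate]
  set u := vdir pj.1 with hu_def
  set h := uheight S u with hh_def
  set A := S.filter (fun p => vdir p.1 ≠ u ∧ vdir p.1 ≠ -u) with hA_def
  set C := S.filter (fun p => vdir p.1 = -u) with hC_def
  set B := S.filter (fun p => vdir p.1 = u) with hB_def
  have hprim : IsPrimitive u := by rw [hu_def]; exact isPrim_vdir hpj0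
  have hpj1 : pj.1 = (vlen pj.1 : ℤ) • u := by rw [hu_def]; exact (vdir_smul hpj0).symm
  clear_value u h A C B
  have hu0 : u ≠ 0 := prim_ne_zero hprim
  -- smul cancellation
  have hcancel : ∀ k m : ℤ, k • u = m • u → k = m := by
    intro k m hkm
    have : (k - m) • u = 0 := by rw [sub_smul, hkm, sub_self]
    rcases smul_eq_zero.mp this with h' | h'
    · omega
    · exact absurd h' hu0
  have huneg : u ≠ -u := by
    intro hcon
    have h1 : (1:ℤ) • u = (-1:ℤ) • u := by rw [one_smul, neg_one_smul]; exact hcon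
    have := hcancel 1 (-1) h1
    omega
  -- B = {pj}
  have hBpj : B = {pj} := by
    ext q
    simp only [hB_def, Finset.mem_filter, Finset.mem_singleton]
    constructor
    · rintro ⟨hqS, hq⟩; exact hdist q hqS pj hpj (hq.trans hu_def)
    · rintro rfl; exact ⟨hpj, hu_def.symm⟩
  -- symp vanishes on B and C directions
  have hsymp0 : ∀ p ∈ S, (vdir p.1 = u ∨ vdir p.1 = -u) → symp u p.1 = 0 := by
    rintro p hp (hd | hd) <;>
      rw [← vdir_smul (hne p hp), hd, symp_smul] <;>
      simp [symp_self, symp, neg_sub_comm] <;> ring_nf <;> simp [mul_comm]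
  -- partition of sums over S
  have hABC : A ∪ (B ∪ C) = S := by
    ext p
    simp only [hA_def, hB_def, hC_def, Finset.mem_union, Finset.mem_filter]
    by_cases hp : p ∈ S <;> by_cases h1 : vdir p.1 = u <;> by_cases h2 : vdir p.1 = -u <;> tauto
  have hd1 : Disjoint A (B ∪ C) := by
    rw [Finset.disjoint_left]
    intro p hp hp'
    simp only [hA_def, Finset.mem_filter] at hp
    simp only [hB_def, hC_def, Finset.mem_union, Finset.mem_filter] at hp'
    tauto
  have hd2 : Disjoint B C := by
    rw [Finset.disjoint_left]
    intro p hp hp'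
    simp only [hB_def, Finset.mem_filter] at hp
    simp only [hC_def, Finset.mem_filter] at hp'
    exact huneg (hp.2.symm.trans hp'.2)
  have hsplit : ∀ {M : Type} (_ : AddCommMonoid M) (f : LPair → M),
      ∑ p ∈ S, f p = ∑ p ∈ A, f p + ∑ p ∈ B, f p + ∑ p ∈ C, f p := by
    intro M _ f
    rw [← hABC, Finset.sum_union hd1, Finset.sum_union hd2, add_assoc]
  -- height over A
  have hhA : ∑ p ∈ A, posZ (symp u p.1) = h := by
    rw [hh_def, uheight, hsplit inferInstance]
    have hBz : ∑ p ∈ B, posZ (symp u p.1) = 0 := by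
      apply Finset.sum_eq_zero
      intro p hp
      simp only [hB_def, Finset.mem_filter] at hp
      rw [hsymp0 p hp.1 (Or.inl hp.2)]; simp [posZ]
    have hCz : ∑ p ∈ C, posZ (symp u p.1) = 0 := by
      apply Finset.sum_eq_zero
      intro p hp
      simp only [hC_def, Finset.mem_filter] at hp
      rw [hsymp0 p hp.1 (Or.inr hp.2)]; simp [posZ]
    rw [hBz, hCz, add_zero, add_zero]
  -- sum over S decomposed
  have hsum' : ∑ p ∈ A, p.1 + pj.1 + ∑ p ∈ C, p.1 = 0 := by
    rw [← hsum, hsplit inferInstance Prod.fst, hBpj, Finset.sum_singleton]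
  -- l bounds
  have hlL : (l : ℤ) ≤ (vlen pj.1 : ℤ) := by
    have := Multiset.single_le_sum (fun x _ => Nat.zero_le x) l hl
    rw [hpart pj hpj] at this
    exact_mod_cast this
  have hhl : (0 : ℤ) ≤ h - l := by omega
  -- sum of part1
  set f1 : LPair → LPair := fun p => (p.1 + posZ (symp u p.1) • u, p.2) with hf1
  have hinj : ∀ p ∈ A, ∀ q ∈ A, f1 p = f1 q → p = q := by
    intro p hp q hq hfpq
    rw [hf1] at hfpq
    simp only [Prod.mk.injEq] at hfpq
    obtain ⟨h1, h2⟩ := hfpq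
    have hsy : symp u p.1 = symp u q.1 := by
      have := congrArg (symp u) h1
      rwa [symp_add, symp_add, symp_smul, symp_smul, symp_self, mul_zero, mul_zero,
        add_zero, add_zero] at this
    have : p.1 = q.1 := by
      rw [hsy] at h1
      exact add_right_cancel h1
    exact Prod.ext this h2
  have hp1 : ∑ p ∈ Finset.image f1 A, p.1 = (∑ p ∈ A, p.1) + h • u := by
    rw [Finset.sum_image hinj]
    simp only [hf1]
    rw [Finset.sum_add_distrib, ← Finset.sum_smul, hhA]
  -- sum of part2
  have hp2 : ∑ p ∈ (if pj.2 = {l} then (∅ : Finset LPair)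
      else {(((vlen pj.1 : ℤ) - (l : ℤ)) • u, pj.2.erase l)}), p.1
      = ((vlen pj.1 : ℤ) - (l : ℤ)) • u := by
    split_ifs with hc
    · have hll : (l : ℤ) = (vlen pj.1 : ℤ) := by
        have := hpart pj hpj
        rw [hc, Multiset.sum_singleton] at this
        exact_mod_cast this
      simp [← hll]
    · simp
  -- sum of part3
  have hp3 : ∑ p ∈ (if C.Nonempty then
        Finset.image (fun p => (p.1 + (h - (l:ℤ)) • -u, (h - (l:ℤ)).toNat ::ₘ p.2)) C
      else if (l:ℤ) < h then {(-(h - (l:ℤ)) • u, {(h - (l:ℤ)).toNat})} else ∅), p.1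
      = (∑ p ∈ C, p.1) - (h - (l:ℤ)) • u := by
    by_cases hCne : C.Nonempty
    · obtain ⟨ps, hps⟩ := hCne
      have hCsing : C = {ps} := by
        ext q
        simp only [hC_def, Finset.mem_filter, Finset.mem_singleton]
        constructor
        · rintro ⟨hqS, hq⟩
          have hps' := hps
          simp only [hC_def, Finset.mem_filter] at hps'
          exact hdist q hqS ps hps'.1 (hq.trans hps'.2.symm)
        · rintro rfl
          simpa only [hC_def, Finset.mem_filter] using hps
      rw [if_pos ⟨ps, hps⟩, hCsing, Finset.image_singleton, Finset.sum_singleton,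
        Finset.sum_singleton]
      show ps.1 + (h - (l:ℤ)) • -u = ps.1 - (h - (l:ℤ)) • u
      rw [smul_neg]; abel
    · have hCe : C = ∅ := Finset.not_nonempty_iff_eq_empty.mp hCne
      rw [if_neg hCne, hCe, Finset.sum_empty, zero_sub]
      split_ifs with hlt
      · rw [Finset.sum_singleton]
        show (-(h - (l:ℤ))) • u = -((h - (l:ℤ)) • u)
        rw [neg_smul]
      · have : h = (l:ℤ) := by omega
        simp [this]
  -- disjointness of the three parts
  have hm1 : ∀ x ∈ Finset.image f1 A, symp u x.1 ≠ 0 := by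
    intro x hx
    obtain ⟨p, hp, rfl⟩ := Finset.mem_image.mp hx
    simp only [hA_def, Finset.mem_filter] at hp
    simp only [hf1]
    rw [symp_add, symp_smul, symp_self, mul_zero, add_zero]
    exact symp_ne (hne p hp.1) hprim hp.2.1 hp.2.2
  have hm2 : ∀ x ∈ (if pj.2 = {l} then (∅ : Finset LPair)
      else {(((vlen pj.1 : ℤ) - (l : ℤ)) • u, pj.2.erase l)}), symp u x.1 = 0 := by
    intro x hx
    split_ifs at hx with hc
    · simp at hx
    · rw [Finset.mem_singleton] at hx
      rw [hx]
      show symp u (((vlen pj.1 : ℤ) - (l : ℤ)) • u) = 0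
      rw [symp_smul, symp_self, mul_zero]
  have hm3 : ∀ x ∈ (if C.Nonempty then
        Finset.image (fun p => (p.1 + (h - (l:ℤ)) • -u, (h - (l:ℤ)).toNat ::ₘ p.2)) C
      else if (l:ℤ) < h then {(-(h - (l:ℤ)) • u, {(h - (l:ℤ)).toNat})} else ∅),
      symp u x.1 = 0 := by
    intro x hx
    split_ifs at hx with hc1 hc2
    · obtain ⟨p, hp, rfl⟩ := Finset.mem_image.mp hx
      simp only [hC_def, Finset.mem_filter] at hp
      show symp u (p.1 + (h - (l:ℤ)) • -u) = 0
      rw [symp_add, symp_smul, hsymp0 p hp.1 (Or.inr hp.2)]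
      have : symp u (-u) = 0 := by
        have := symp_smul u (-1) u
        simpa [symp_self] using this
      rw [this, mul_zero, add_zero]
    · rw [Finset.mem_singleton] at hx
      rw [hx]
      show symp u ((-(h - (l:ℤ))) • u) = 0
      rw [symp_smul, symp_self, mul_zero]
    · simp at hx
  -- coefficients for part2 / part3 vectors
  have hd12 : Disjoint (Finset.image f1 A) (if pj.2 = {l} then (∅ : Finset LPair)
      else {(((vlen pj.1 : ℤ) - (l : ℤ)) • u, pj.2.erase l)}) := by
    rw [Finset.disjoint_left]
    intro x hx hx'
    exact hm1 x hx (hm2 x hx')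
  have hd13 : Disjoint (Finset.image f1 A ∪ (if pj.2 = {l} then (∅ : Finset LPair)
      else {(((vlen pj.1 : ℤ) - (l : ℤ)) • u, pj.2.erase l)}))
      (if C.Nonempty then
        Finset.image (fun p => (p.1 + (h - (l:ℤ)) • -u, (h - (l:ℤ)).toNat ::ₘ p.2)) C
      else if (l:ℤ) < h then {(-(h - (l:ℤ)) • u, {(h - (l:ℤ)).toNat})} else ∅) := by
    rw [Finset.disjoint_left]
    intro x hx hx'
    rcases Finset.mem_union.mp hx with hx1 | hx2
    · exact hm1 x hx1 (hm3 x hx')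
    · -- x in part2 and part3: compare coefficients
      have hx2' : x.1 = ((vlen pj.1 : ℤ) - (l : ℤ)) • u := by
        split_ifs at hx2 with hc
        · simp at hx2
        · rw [Finset.mem_singleton] at hx2; rw [hx2]
      have : ∃ m : ℤ, m < 0 ∧ x.1 = m • u := by
        split_ifs at hx' with hc1 hc2
        · obtain ⟨p, hp, hpx⟩ := Finset.mem_image.mp hx'
          simp only [hC_def, Finset.mem_filter] at hp
          obtain ⟨k, hkpos, hk⟩ : ∃ k : ℤ, 0 < k ∧ p.1 = k • (-u) :=
            ⟨vlen p.1, vlen_pos (hne p hp.1), by rw [← hp.2, vdir_smul (hne p hp.1)]⟩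
          refine ⟨-k - (h - (l:ℤ)), by omega, ?_⟩
          have hx1 : x.1 = p.1 + (h - (l:ℤ)) • -u := (congrArg Prod.fst hpx).symm
          rw [hx1, hk]
          module
        · rw [Finset.mem_singleton] at hx'
          refine ⟨-(h - (l:ℤ)), by omega, ?_⟩
          rw [hx']
        · simp at hx'
      obtain ⟨m, hm, hxm⟩ := this
      have := hcancel _ _ (hx2'.symm.trans hxm)
      omega
  -- put it together
  rw [Finset.sum_union hd13, Finset.sum_union hd12, hp1, hp2, hp3]
  set L : ℤ := (vlen pj.1 : ℤ) with hL_def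
  clear_value L
  have key : (∑ p ∈ A, p.1) + h • u + (L - (l:ℤ)) • u
      + ((∑ p ∈ C, p.1) - (h - (l:ℤ)) • u)
      = (∑ p ∈ A, p.1) + pj.1 + (∑ p ∈ C, p.1) := by
    rw [hpj1]
    module
  rw [key, hsum']
end helper
end

section
/- For every $n \geq 0$, the $A_n$ log datum $\{((1,0),(1)),\ ((0,n+1),(1^{n+1})),\ ((-1,-n-1),(1))\}$ is zero-mutable: there exists a finite sequence of mutations converting it into a zero-mutable rank one log datum (namely, $n+1$ successive mutations $\mu_{2,1}$ in the second vector, yielding $\{((1,0),(1)),((-1,0),(1))\}$). -/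
/-- The `Aₙ` log datum `{((1,0),(1)), ((0,n+1),(1^{n+1})), ((-1,-n-1),(1))}`. -/
def Adatum (n : ℕ) : Finset LPair :=
  {(((1 : ℤ), (0 : ℤ)), ({1} : Multiset ℕ)),
   (((0 : ℤ), (n : ℤ) + 1), Multiset.replicate (n + 1) 1),
   (((-1 : ℤ), -((n : ℤ) + 1)), ({1} : Multiset ℕ))}

/-- A rank-one log datum `{(e,ν₁),(-e,ν₂)}` is zero-mutable if the two partitions agree. -/
def IsRankOneZeroMutable (S : Finset LPair) : Prop :=
  IsLogDatum S ∧ ∃ e : Vec, ∃ ν : Multiset ℕ, e ≠ 0 ∧ S = {(e, ν), (-e, ν)}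

/-- `T` is obtained from `S` by a single mutation of a rank-two log datum. -/
def IsMutationStep (S T : Finset LPair) : Prop :=
  IsLogDatum S ∧ 2 < S.card ∧
    ∃ pj ∈ S, ∃ l ∈ pj.2, (l : ℤ) ≤ uheight S (vdir pj.1) ∧ T = mutate S pj l

/-- A log datum is zero-mutable if some finite sequence of mutations converts it into a
zero-mutable rank one log datum. -/
def IsZeroMutable (S : Finset LPair) : Prop :=
  ∃ T, Relation.ReflTransGen IsMutationStep S T ∧ IsRankOneZeroMutable T

lemma dir1 : vdir ((1 : ℤ), (0:ℤ)) = (1,0) := by decide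

lemma dir2 (n : ℕ) : vdir ((0 : ℤ), (n:ℤ)+1) = (0,1) := by
  have h : ((n:ℤ)+1).natAbs = n+1 := by omega
  simp [vdir, vlen, Int.gcd, h]
  exact Int.ediv_self (by positivity)

lemma dir_neg1 (m : ℤ) : vdir ((-1:ℤ), m) = ((-1:ℤ), m) := by
  simp [vdir, vlen, Int.gcd]

lemma dir3 (n : ℕ) : vdir ((-1 : ℤ), -((n:ℤ)+1)) = ((-1:ℤ), -((n:ℤ)+1)) := by
  simp [vdir, vlen, Int.gcd]

lemma len2 (n : ℕ) : vlen ((0 : ℤ), (n:ℤ)+1) = n+1 := by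
  simp [vlen, Int.gcd]; omega

-- abbreviations for the three elements
def pa : LPair := (((1 : ℤ), (0 : ℤ)), ({1} : Multiset ℕ))
def pb (n : ℕ) : LPair := (((0 : ℤ), (n : ℤ) + 1), Multiset.replicate (n + 1) 1)
def pc (n : ℕ) : LPair := (((-1 : ℤ), -((n : ℤ) + 1)), ({1} : Multiset ℕ))

lemma Adatum_eq (n : ℕ) : Adatum n = insert pa (insert (pb n) {pc n}) := rfl

lemma pab (n : ℕ) : pa ≠ pb n := by simp [pa, pb, Prod.ext_iff]
lemma pac (n : ℕ) : pa ≠ pc n := by simp [pa, pc, Prod.ext_iff]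
lemma pbc (n : ℕ) : pb n ≠ pc n := by simp [pb, pc, Prod.ext_iff]

lemma card_Adatum (n : ℕ) : (Adatum n).card = 3 := by
  rw [Adatum_eq, Finset.card_insert_of_notMem, Finset.card_insert_of_notMem] <;>
    simp [pab, pac, pbc]

lemma uheight_Adatum (n : ℕ) : uheight (Adatum n) ((0:ℤ),(1:ℤ)) = 1 := by
  rw [Adatum_eq, uheight, Finset.sum_insert (by simp [pab, pac]),
    Finset.sum_insert (by simp [pbc]), Finset.sum_singleton]
  simp [pa, pb, pc, symp, posZ]

lemma isLogDatum_Adatum (n : ℕ) : IsLogDatum (Adatum n) := by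
  refine ⟨?_, ?_, ?_, ?_⟩
  · intro p hp
    rw [Adatum_eq] at hp
    simp only [Finset.mem_insert, Finset.mem_singleton] at hp
    rcases hp with h|h|h <;> subst h <;> simp [pa, pb, pc, Prod.ext_iff] <;> omega
  · intro p hp
    rw [Adatum_eq] at hp
    simp only [Finset.mem_insert, Finset.mem_singleton] at hp
    rcases hp with h|h|h <;> subst h <;>
      simp [pa, pb, pc, vlen, Int.gcd, Multiset.sum_replicate] <;> omega
  · intro p hp q hq hpq
    rw [Adatum_eq] at hp hq
    simp only [Finset.mem_insert, Finset.mem_singleton] at hp hq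
    rcases hp with h|h|h <;> rcases hq with h'|h'|h' <;> subst h <;> subst h' <;>
      first
      | rfl
      | (exfalso; revert hpq; simp [pa, pb, pc, dir1, dir2, dir3, dir_neg1, Prod.ext_iff])
      | (exfalso; revert hpq; simp [pa, pb, pc, dir1, dir2, dir3, dir_neg1, Prod.ext_iff]; omega)
  · rw [Adatum_eq, Finset.sum_insert (by simp [pab, pac]),
      Finset.sum_insert (by simp [pbc]), Finset.sum_singleton]
    simp [pa, pb, pc, Prod.ext_iff]


lemma uheight_pabc (n : ℕ) : uheight ({pa, pb n, pc n} : Finset LPair) ((0:ℤ),(1:ℤ)) = 1 :=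
  uheight_Adatum n

lemma neg01 : -(((0:ℤ),(1:ℤ)) : Vec) = ((0:ℤ),(-1:ℤ)) := by decide

lemma filter1 (n : ℕ) :
    Finset.filter (fun p => vdir p.1 ≠ ((0:ℤ),(1:ℤ)) ∧ vdir p.1 ≠ -((0:ℤ),(1:ℤ)))
      ({pa, pb n, pc n} : Finset LPair) = {pa, pc n} := by
  rw [Finset.filter_insert, Finset.filter_insert, Finset.filter_singleton,
    if_pos, if_neg, if_pos] <;>
    simp [pa, pb, pc, dir1, dir2, dir_neg1, neg01, Prod.ext_iff]

lemma filter2 (n : ℕ) :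
    Finset.filter (fun p => vdir p.1 = -((0:ℤ),(1:ℤ)))
      ({pa, pb n, pc n} : Finset LPair) = ∅ := by
  rw [Finset.filter_insert, Finset.filter_insert, Finset.filter_singleton,
    if_neg, if_neg, if_neg] <;>
    simp [pa, pb, pc, dir1, dir2, dir_neg1, neg01, Prod.ext_iff]

lemma rep_ne (n : ℕ) : Multiset.replicate (n+2) 1 ≠ ({1} : Multiset ℕ) := by
  intro h
  have := congrArg Multiset.card h
  simp at this

lemma mutate_succ (n : ℕ) : mutate (Adatum (n+1)) (pb (n+1)) 1 = Adatum n := by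
  have huj : vdir (pb (n+1)).1 = ((0:ℤ),(1:ℤ)) := dir2 (n+1)
  simp only [mutate, huj, Adatum_eq, filter1, filter2, uheight_pabc,
    Finset.not_nonempty_empty, if_false, Nat.cast_one]
  rw [if_neg (show ¬((pb (n+1)).2 = ({1}:Multiset ℕ)) from rep_ne n),
    if_neg (by norm_num : ¬((1:ℤ) < 1))]
  rw [Finset.image_insert, Finset.image_singleton]
  have h1 : ((pa.1 + posZ (symp ((0:ℤ),(1:ℤ)) pa.1) • (((0:ℤ),(1:ℤ)) : Vec), pa.2) : LPair) = pa := by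
    simp [pa, posZ, symp, Prod.ext_iff]
  have h2 : (((pc (n+1)).1 + posZ (symp ((0:ℤ),(1:ℤ)) (pc (n+1)).1) • (((0:ℤ),(1:ℤ)) : Vec), (pc (n+1)).2) : LPair) = pc n := by
    simp [pc, posZ, symp, Prod.ext_iff]
    try ring
  have h3 : (((((vlen (pb (n+1)).1 : ℤ) - 1) • (((0:ℤ),(1:ℤ)) : Vec)), (pb (n+1)).2.erase 1) : LPair) = pb n := by
    have hl : vlen (pb (n+1)).1 = n+2 := len2 (n+1)
    rw [hl]
    have he : (pb (n+1)).2.erase 1 = Multiset.replicate (n+1) 1 := by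
      show (Multiset.replicate (n+1+1) 1).erase 1 = _
      rw [Multiset.replicate_succ, Multiset.erase_cons_head]
    rw [he]
    simp [pb, Prod.ext_iff]
    try ring
  rw [h1, h2, h3]
  ext p
  simp only [Finset.mem_union, Finset.mem_insert, Finset.mem_singleton,
    Finset.notMem_empty, or_false]
  tauto

lemma mutate_zero : mutate (Adatum 0) (pb 0) 1
    = ({pa, (((-1:ℤ),(0:ℤ)), ({1}:Multiset ℕ))} : Finset LPair) := by decide

def Tfin : Finset LPair := {pa, (((-1:ℤ),(0:ℤ)), ({1}:Multiset ℕ))}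

lemma step_gen (n : ℕ) (T : Finset LPair) (h : T = mutate (Adatum n) (pb n) 1) :
    IsMutationStep (Adatum n) T := by
  refine ⟨isLogDatum_Adatum n, by rw [card_Adatum]; norm_num, pb n, ?_, 1, ?_, ?_, h⟩
  · rw [Adatum_eq]; simp
  · show (1:ℕ) ∈ Multiset.replicate (n+1) 1
    rw [Multiset.mem_replicate]; omega
  · rw [show (pb n).1 = ((0:ℤ), (n:ℤ)+1) from rfl, dir2, uheight_Adatum]
    norm_num

lemma final : IsRankOneZeroMutable Tfin := by
  constructor
  · refine ⟨?_, ?_, ?_, ?_⟩ <;> decide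
  · exact ⟨((1:ℤ),(0:ℤ)), {1}, by decide, by decide⟩


/-- for every `n ≥ 0`, the `Aₙ` log datum is zero-mutable. -/
theorem Adatum_isZeroMutable (n : ℕ) : IsZeroMutable (Adatum n) := by
  induction n with
  | zero =>
    exact ⟨Tfin, Relation.ReflTransGen.single (step_gen 0 Tfin mutate_zero.symm), final⟩
  | succ m ih =>
    obtain ⟨T, hT, hr⟩ := ih
    exact ⟨T, Relation.ReflTransGen.head (step_gen (m+1) (Adatum m) (mutate_succ m).symm) hT, hr⟩
end
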